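/- Let ρ be any probability measure on the space of sequences [β_min, β_max]^ℕ and let ℙ = ρ × λ be the product of ρ with Lebesgue measure λ on [0,1]. For every m ≥ 1 and every word c = (c_1,…,c_m) ∈ {0,1}^m, the (outer) measure under ℙ of the set {(β, x) : b_i(β, x) = c_i for i = 1,…,m} is at most κ β_min^{−m}. In particular, if ℙ_m denotes the induced distribution of (b_1,…,b_m) on {0,1}^m, its min-entropy satisfies H_∞(ℙ_m) = −log₂ max_{c ∈ {0,1}^m} ℙ_m(c) ≥ m·log₂ β_min − log₂ κ. -/

import Mathlib

/-!
Inputs that produce the same bits `c₁ … c_m` are mapped to `x_m` by an affine map of slope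
`β₁ ⋯ β_m ≥ β_min ^ m`, while every orbit stays in the invariant interval `[0, κ]`. So for each
fixed `β` the set of such inputs has diameter, hence Lebesgue measure, at most `κ β_min^{-m}`;
integrating over `ρ` bounds `ℙ`, and taking `log₂` gives the min-entropy estimate.
-/

open MeasureTheory Filter Set Real

/-- Orbit of the random-amplification β-encoder: `rIter βs u x n` is the iterate `x_n`,
where `x_0 = x` and `x_n = βs_n · x_{n-1} − b_n`. -/
noncomputable def rIter (βs u : ℕ → ℝ) (x : ℝ) : ℕ → ℝ
  | 0 => x
  | n + 1 =>
      if βs (n + 1) * rIter βs u x n < u (n + 1) then βs (n + 1) * rIter βs u x n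
      else βs (n + 1) * rIter βs u x n - 1

/-- The bit `b_n` produced by the random-amplification β-encoder at step `n ≥ 1`. -/
noncomputable def rBit (βs u : ℕ → ℝ) (x : ℝ) (n : ℕ) : ℝ :=
  if βs n * rIter βs u x (n - 1) < u n then 0 else 1

/-- The event that the first `m` bits of the random-amplification β-encoder, run with
amplification sequence `p.1` and input `p.2`, equal the word `c`. -/
def rEvent (u : ℕ → ℝ) (m : ℕ) (c : ℕ → ℝ) : Set ((ℕ → ℝ) × ℝ) :=
  {p : (ℕ → ℝ) × ℝ | ∀ i ∈ Finset.Icc 1 m, rBit p.1 u p.2 i = c i}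

lemma rIter_succ (βs u : ℕ → ℝ) (x : ℝ) (n : ℕ) :
    rIter βs u x (n + 1) = βs (n + 1) * rIter βs u x n - rBit βs u x (n + 1) := by
  by_cases h : βs (n + 1) * rIter βs u x n < u (n + 1) <;> simp [rIter, rBit, h]

lemma measurable_rIter (u : ℕ → ℝ) (n : ℕ) :
    Measurable fun p : (ℕ → ℝ) × ℝ => rIter p.1 u p.2 n := by
  induction n with
  | zero => exact measurable_snd
  | succ n ih =>
    have hf : Measurable fun p : (ℕ → ℝ) × ℝ => p.1 (n + 1) * rIter p.1 u p.2 n :=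
      ((measurable_pi_apply (n + 1)).comp measurable_fst).mul ih
    exact Measurable.ite (measurableSet_lt hf measurable_const) hf (hf.sub measurable_const)

lemma measurable_rBit (u : ℕ → ℝ) (n : ℕ) :
    Measurable fun p : (ℕ → ℝ) × ℝ => rBit p.1 u p.2 n := by
  have hf : Measurable fun p : (ℕ → ℝ) × ℝ => p.1 n * rIter p.1 u p.2 (n - 1) :=
    ((measurable_pi_apply n).comp measurable_fst).mul (measurable_rIter u (n - 1))
  exact Measurable.ite (measurableSet_lt hf measurable_const) measurable_const measurable_const

lemma measurableSet_rEvent (u : ℕ → ℝ) (m : ℕ) (c : ℕ → ℝ) : MeasurableSet (rEvent u m c) := by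
  have : rEvent u m c = ⋂ i ∈ Finset.Icc 1 m, {p : (ℕ → ℝ) × ℝ | rBit p.1 u p.2 i = c i} := by
    ext p; simp [rEvent]
  rw [this]
  exact .biInter (Finset.Icc 1 m).countable_toSet fun i _ =>
    measurableSet_eq_fun (measurable_rBit u i) measurable_const

-- A step that subtracts `1` maps `[u, B K]` into `[0, K]` exactly when `(B - 1) K ≤ 1`.
lemma rIter_mem_Icc {βs u : ℕ → ℝ} {B K x : ℝ} (hBK : (B - 1) * K ≤ 1)
    (hβ : ∀ n, 1 ≤ n → βs n ∈ Icc 0 B) (hu : ∀ n, 1 ≤ n → u n ∈ Icc 1 K)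
    (hx : x ∈ Icc 0 K) (n : ℕ) : rIter βs u x n ∈ Icc 0 K := by
  induction n with
  | zero => exact hx
  | succ n ih =>
    obtain ⟨hβ0, hβB⟩ := hβ (n + 1) n.succ_pos
    obtain ⟨hu1, huK⟩ := hu (n + 1) n.succ_pos
    have hle : βs (n + 1) * rIter βs u x n ≤ B * K :=
      mul_le_mul hβB ih.2 ih.1 (hβ0.trans hβB)
    by_cases h : βs (n + 1) * rIter βs u x n < u (n + 1)
    · simp only [rIter, h, if_true]
      exact ⟨mul_nonneg hβ0 ih.1, h.le.trans huK⟩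
    · simp only [rIter, h, if_false]
      constructor <;> linarith

lemma rIter_sub_rIter {βs u : ℕ → ℝ} {x y : ℝ} {n : ℕ}
    (h : ∀ i ∈ Finset.Icc 1 n, rBit βs u x i = rBit βs u y i) :
    rIter βs u x n - rIter βs u y n = (∏ i ∈ Finset.Icc 1 n, βs i) * (x - y) := by
  induction n with
  | zero => simp [rIter]
  | succ n ih =>
    have hn : 1 ≤ n + 1 := n.succ_pos
    rw [rIter_succ, rIter_succ, h (n + 1) (Finset.mem_Icc.2 ⟨hn, le_rfl⟩),
      Finset.prod_Icc_succ_top hn]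
    linear_combination βs (n + 1) * ih fun i hi => h i (Finset.Icc_subset_Icc_right n.le_succ hi)

lemma volume_setOf_rBit_eq_le {βs u c : ℕ → ℝ} {βmin βmax K : ℝ} (hβmin : 0 < βmin)
    (hK : (βmax - 1) * K ≤ 1) (hβ : ∀ n, 1 ≤ n → βs n ∈ Icc βmin βmax)
    (hu : ∀ n, 1 ≤ n → u n ∈ Icc 1 K) (m : ℕ) :
    volume.restrict (Icc 0 1) {x : ℝ | ∀ i ∈ Finset.Icc 1 m, rBit βs u x i = c i}
      ≤ ENNReal.ofReal (K / βmin ^ m) := by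
  have hK1 : 1 ≤ K := (hu 1 le_rfl).1.trans (hu 1 le_rfl).2
  have hβ' : ∀ n, 1 ≤ n → βs n ∈ Icc 0 βmax := fun n hn =>
    ⟨hβmin.le.trans (hβ n hn).1, (hβ n hn).2⟩
  have hpow : 0 < βmin ^ m := pow_pos hβmin m
  have hprod : βmin ^ m ≤ ∏ i ∈ Finset.Icc 1 m, βs i :=
    calc βmin ^ m = ∏ _i ∈ Finset.Icc 1 m, βmin := by simp
      _ ≤ _ := Finset.prod_le_prod (fun _ _ => hβmin.le)
          fun i hi => (hβ i (Finset.mem_Icc.1 hi).1).1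
  rw [Measure.restrict_apply' measurableSet_Icc]
  refine (Real.volume_le_diam _).trans (Metric.ediam_le_iff.2 ?_)
  rintro x ⟨hxc, hx⟩ y ⟨hyc, hy⟩
  have hxm := rIter_mem_Icc hK hβ' hu ⟨hx.1, hx.2.trans hK1⟩ m
  have hym := rIter_mem_Icc hK hβ' hu ⟨hy.1, hy.2.trans hK1⟩ m
  have hsub := rIter_sub_rIter (u := u) fun i hi => (hxc i hi).trans (hyc i hi).symm
  rw [edist_dist, Real.dist_eq]
  refine ENNReal.ofReal_le_ofReal ?_
  rw [le_div_iff₀ hpow]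
  calc |x - y| * βmin ^ m ≤ |x - y| * ∏ i ∈ Finset.Icc 1 m, βs i := by gcongr
    _ = |rIter βs u x m - rIter βs u y m| := by
      rw [hsub, abs_mul, abs_of_pos (hpow.trans_le hprod), mul_comm]
    _ ≤ K := abs_sub_le_iff.2 ⟨by linarith [hxm.2, hym.1], by linarith [hxm.1, hym.2]⟩

lemma MeasureTheory.Measure.prod_apply_le_of_ae_le {α β : Type*}
    [MeasurableSpace α] [MeasurableSpace β] {μ : Measure α} [IsProbabilityMeasure μ] {ν : Measure β} {s : Set (α × β)} {C : ENNReal}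
    (hs : MeasurableSet s) (h : ∀ᵐ a ∂μ, ν (Prod.mk a ⁻¹' s) ≤ C) : μ.prod ν s ≤ C :=
  calc μ.prod ν s ≤ ∫⁻ a, ν (Prod.mk a ⁻¹' s) ∂μ := Measure.prod_apply_le hs
    _ ≤ ∫⁻ _, C ∂μ := lintegral_mono_ae h
    _ = C := by simp

lemma sub_le_neg_logb_of_le_div_pow {p K β : ℝ} {m : ℕ} (hp : 0 < p) (hK : 0 < K)
    (hβ : 0 < β) (h : p ≤ K / β ^ m) : m * logb 2 β - logb 2 K ≤ -logb 2 p := by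
  have := logb_le_logb_of_le one_lt_two hp h
  rw [logb_div hK.ne' (pow_pos hβ m).ne', logb_pow] at this
  linarith

theorem stmt_15_general (βmin βmax : ℝ) (h1 : 1 < βmin)
    (u : ℕ → ℝ) (hu : ∀ n, 1 ≤ n → u n ∈ Set.Icc (1:ℝ) (βmax - 1)⁻¹)
    (ρ : Measure (ℕ → ℝ)) [IsProbabilityMeasure ρ]
    (hρ : ∀ᵐ b ∂ρ, ∀ n, 1 ≤ n → b n ∈ Set.Icc βmin βmax)
    (m : ℕ) (c : ℕ → ℝ) :
    (ρ.prod (volume.restrict (Set.Icc (0:ℝ) 1))) (rEvent u m c)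
        ≤ ENNReal.ofReal ((βmax - 1)⁻¹ / βmin ^ m) ∧
    ((ρ.prod (volume.restrict (Set.Icc (0:ℝ) 1))) (rEvent u m c) ≠ 0 →
      (m : ℝ) * Real.logb 2 βmin - Real.logb 2 (βmax - 1)⁻¹ ≤
        -Real.logb 2 (((ρ.prod (volume.restrict (Set.Icc (0:ℝ) 1))) (rEvent u m c)).toReal)) := by
  have hβmin : 0 < βmin := one_pos.trans h1
  have hκ : 0 < (βmax - 1)⁻¹ := by linarith [(hu 1 le_rfl).1, (hu 1 le_rfl).2]
  have hbound := Measure.prod_apply_le_of_ae_le (measurableSet_rEvent u m c) <| hρ.mono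
    fun b hb => volume_setOf_rBit_eq_le hβmin mul_inv_le_one hb hu m
  refine ⟨hbound, fun hne => sub_le_neg_logb_of_le_div_pow ?_ hκ hβmin ?_⟩
  · exact ENNReal.toReal_pos hne (ne_top_of_le_ne_top ENNReal.ofReal_ne_top hbound)
  · exact ENNReal.toReal_le_of_le_ofReal (by positivity) hbound

/-- for `ℙ = ρ × λ` with `ρ` any probability measure on the sequence space
(supported on sequences with values in `[β_min, β_max]`) and `λ` Lebesgue measure on `[0,1]`,
for every `m ≥ 1` and every word `c ∈ {0,1}^m` one has
`ℙ(b_1 = c_1, …, b_m = c_m) ≤ κ β_min^{−m}`; in particular the min-entropy of the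
distribution `ℙ_m` of `(b_1,…,b_m)` satisfies `H_∞(ℙ_m) ≥ m·log₂ β_min − log₂ κ`. -/
theorem stmt_15 (βmin βmax : ℝ) (h1 : 1 < βmin) (h2 : βmin ≤ βmax) (h3 : βmax < 2)
    (u : ℕ → ℝ) (hu : ∀ n, 1 ≤ n → u n ∈ Set.Icc (1:ℝ) (βmax - 1)⁻¹)
    (ρ : Measure (ℕ → ℝ)) [IsProbabilityMeasure ρ]
    (hρ : ∀ᵐ b ∂ρ, ∀ n, 1 ≤ n → b n ∈ Set.Icc βmin βmax)
    (m : ℕ) (hm : 1 ≤ m) (c : ℕ → ℝ) (hc : ∀ i, c i = 0 ∨ c i = 1) :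
    (ρ.prod (volume.restrict (Set.Icc (0:ℝ) 1))) (rEvent u m c)
        ≤ ENNReal.ofReal ((βmax - 1)⁻¹ / βmin ^ m) ∧
    ((ρ.prod (volume.restrict (Set.Icc (0:ℝ) 1))) (rEvent u m c) ≠ 0 →
      (m : ℝ) * Real.logb 2 βmin - Real.logb 2 (βmax - 1)⁻¹ ≤
        -Real.logb 2 (((ρ.prod (volume.restrict (Set.Icc (0:ℝ) 1))) (rEvent u m c)).toReal)) :=
  stmt_15_general βmin βmax h1 u hu ρ hρ m c
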